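/- The theory SAPP is complete: for every L-sentence φ, either SAPP ⊨ φ or SAPP ⊨ ¬φ (equivalently, any two models of SAPP are elementarily equivalent). -/
import Mathlib


open FirstOrder Language Structure BoundedFormula

/-- The relation symbols of the language `L`: a single binary relation `O`. -/
inductive PerpRel : ℕ → Type
  | o : PerpRel 2

/-- The first-order language with a single binary relation symbol `O`. -/
def L : Language := ⟨fun _ => Empty, PerpRel⟩
  deriving IsRelational

/-- The binary relation symbol `O` of `L`. -/
abbrev oSym : L.Relations 2 := .o

/-- `O(xᵢ, xⱼ)` as a bounded formula. -/
def oBF {n : ℕ} (i j : Fin n) : L.BoundedFormula Empty n :=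
  oSym.boundedFormula₂ (&i) (&j)

/-- Finite conjunction of a list of bounded formulas. -/
def andAll {n : ℕ} : List (L.BoundedFormula Empty n) → L.BoundedFormula Empty n
  | [] => ⊤
  | φ :: l => φ ⊓ andAll l

/-- λ₁ₙ : ∀y₁…∀yₙ∀s(O(s,y₁) ∧ … ∧ O(s,yₙ) → ∃t(t ≠ y₁ ∧ … ∧ t ≠ yₙ ∧ O(s,t))).
Variables: y₁,…,yₙ are de Bruijn indices 0,…,n-1, s is index n, t is index n+1. -/
def lam1 (n : ℕ) : L.Sentence :=
  ((andAll ((List.finRange n).map fun i => oBF (Fin.last n) i.castSucc)).imp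
    ((andAll ((List.finRange n).map fun i =>
        ∼((&(Fin.last (n + 1))) =' (&(i.castSucc.castSucc)))) ⊓
      oBF ((Fin.last n).castSucc) (Fin.last (n + 1))).ex)).alls

/-- λ₂ₙ : ∀y₁…∀yₙ∃s(¬O(s,y₁) ∧ … ∧ ¬O(s,yₙ)).
Variables: y₁,…,yₙ are de Bruijn indices 0,…,n-1, s is index n. -/
def lam2 (n : ℕ) : L.Sentence :=
  ((andAll ((List.finRange n).map fun i => ∼(oBF (Fin.last n) i.castSucc))).ex).alls

/-- λ₃ : ∀x ¬O(x,x). -/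
def lam3 : L.Sentence := (∼(oBF (0 : Fin 1) 0)).alls

/-- λ₄ : ∀x∀y(O(x,y) → O(y,x)). -/
def lam4 : L.Sentence := ((oBF (0 : Fin 2) 1).imp (oBF (1 : Fin 2) 0)).alls

/-- λ₅ : ∀x∃y O(x,y). -/
def lam5 : L.Sentence := ((oBF (0 : Fin 2) 1).ex).alls

/-- λ₆ : ∀x∀y∀z∀t(O(x,z) ∧ O(y,z) ∧ O(x,t) → O(y,t)). -/
def lam6 : L.Sentence :=
  ((oBF (0 : Fin 4) 2 ⊓ oBF (1 : Fin 4) 2 ⊓ oBF (0 : Fin 4) 3).imp (oBF (1 : Fin 4) 3)).alls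

/-- The theory SAPP. -/
def SAPP : L.Theory :=
  {φ | ∃ n, 1 ≤ n ∧ φ = lam1 n} ∪ {φ | ∃ n, 2 ≤ n ∧ φ = lam2 n} ∪ {lam3, lam4, lam5, lam6}

section Sem
variable {M : Type} [L.Structure M]

def oo (a b : M) : Prop := RelMap oSym ![a, b]

@[simp] theorem realize_oBF {n : ℕ} (i j : Fin n) (v : Empty → M) (xs : Fin n → M) :
    (oBF i j).Realize v xs ↔ oo (xs i) (xs j) := by
  simp [oBF, oo]

@[simp] theorem realize_andAll {n : ℕ} (l : List (L.BoundedFormula Empty n)) (v : Empty → M)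
    (xs : Fin n → M) : (andAll l).Realize v xs ↔ ∀ φ ∈ l, φ.Realize v xs := by
  induction l with
  | nil => simp [andAll]
  | cons φ l ih => simp [andAll, ih]

theorem realize_lam1 {n : ℕ} :
    M ⊨ lam1 n ↔ ∀ (y : Fin n → M) (s : M), (∀ i, oo s (y i)) →
      ∃ t, (∀ i, t ≠ y i) ∧ oo s t := by
  rw [Sentence.Realize, lam1, BoundedFormula.realize_alls]
  constructor
  · intro h y s hs
    have := h (Fin.snoc y s)
    rw [realize_imp] at this
    have key : (andAll ((List.finRange n).map fun i => oBF (Fin.last n) i.castSucc)).Realize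
        (default : Empty → M) (Fin.snoc y s) := by
      rw [realize_andAll]
      rintro φ hφ
      simp only [List.mem_map, List.mem_finRange] at hφ
      obtain ⟨i, -, rfl⟩ := hφ
      simpa using hs i
    have := this key
    rw [realize_ex] at this
    obtain ⟨t, ht⟩ := this
    rw [realize_inf, realize_andAll] at ht
    obtain ⟨ht1, ht2⟩ := ht
    refine ⟨t, fun i => ?_, by simpa using ht2⟩
    have := ht1 _ (List.mem_map.2 ⟨i, List.mem_finRange i, rfl⟩)
    simpa using this
  · intro h xs
    rw [realize_imp, realize_andAll]
    intro hs
    obtain ⟨t, ht1, ht2⟩ := h (fun i => xs i.castSucc) (xs (Fin.last n)) (fun i => by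
      have := hs _ (List.mem_map.2 ⟨i, List.mem_finRange i, rfl⟩)
      simpa using this)
    rw [realize_ex]
    refine ⟨t, ?_⟩
    rw [realize_inf, realize_andAll]
    constructor
    · rintro φ hφ
      simp only [List.mem_map, List.mem_finRange] at hφ
      obtain ⟨i, -, rfl⟩ := hφ
      simpa using ht1 i
    · simpa using ht2

theorem realize_lam2 {n : ℕ} :
    M ⊨ lam2 n ↔ ∀ (y : Fin n → M), ∃ s, ∀ i, ¬ oo s (y i) := by
  rw [Sentence.Realize, lam2, BoundedFormula.realize_alls]
  constructor
  · intro h y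
    have := h y
    rw [realize_ex] at this
    obtain ⟨s, hs⟩ := this
    rw [realize_andAll] at hs
    refine ⟨s, fun i => ?_⟩
    have := hs _ (List.mem_map.2 ⟨i, List.mem_finRange i, rfl⟩)
    simpa using this
  · intro h xs
    obtain ⟨s, hs⟩ := h xs
    rw [realize_ex]
    refine ⟨s, ?_⟩
    rw [realize_andAll]
    rintro φ hφ
    simp only [List.mem_map, List.mem_finRange] at hφ
    obtain ⟨i, -, rfl⟩ := hφ
    simpa using hs i

theorem realize_lam3 : M ⊨ lam3 ↔ ∀ x : M, ¬ oo x x := by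
  rw [Sentence.Realize, lam3, BoundedFormula.realize_alls]
  constructor
  · intro h x
    have := h ![x]
    simpa using this
  · intro h xs
    simpa using h (xs 0)

theorem realize_lam4 : M ⊨ lam4 ↔ ∀ x y : M, oo x y → oo y x := by
  rw [Sentence.Realize, lam4, BoundedFormula.realize_alls]
  constructor
  · intro h x y
    have := h ![x, y]
    simpa using this
  · intro h xs
    simpa using h (xs 0) (xs 1)

theorem realize_lam5 : M ⊨ lam5 ↔ ∀ x : M, ∃ y : M, oo x y := by
  rw [Sentence.Realize, lam5, BoundedFormula.realize_alls]
  constructor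
  · intro h x
    have := h ![x]
    simp only [realize_ex, realize_oBF] at this
    obtain ⟨y, hy⟩ := this
    refine ⟨y, ?_⟩
    simpa [Fin.snoc] using hy
  · intro h xs
    obtain ⟨y, hy⟩ := h (xs 0)
    simp only [realize_ex, realize_oBF]
    refine ⟨y, ?_⟩
    simpa [Fin.snoc] using hy

theorem realize_lam6 : M ⊨ lam6 ↔ ∀ x y z t : M, oo x z → oo y z → oo x t → oo y t := by
  rw [Sentence.Realize, lam6, BoundedFormula.realize_alls]
  constructor
  · intro h x y z t h1 h2 h3
    have := h ![x, y, z, t]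
    simp only [realize_imp, realize_inf, realize_oBF] at this
    exact this ⟨⟨h1, h2⟩, h3⟩
  · intro h xs
    simp only [realize_imp, realize_inf, realize_oBF]
    rintro ⟨⟨h1, h2⟩, h3⟩
    exact h (xs 0) (xs 1) (xs 2) (xs 3) h1 h2 h3

end Sem

/-! ### Structure theory of models of SAPP -/

section Models
variable {M : Type} [L.Structure M] [SAPP.Model M]

theorem lam1_mem {n : ℕ} (hn : 1 ≤ n) : lam1 n ∈ SAPP :=
  Or.inl (Or.inl ⟨n, hn, rfl⟩)

theorem lam2_mem {n : ℕ} (hn : 2 ≤ n) : lam2 n ∈ SAPP :=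
  Or.inl (Or.inr ⟨n, hn, rfl⟩)

theorem lam3_mem : lam3 ∈ SAPP := Or.inr (by simp)
theorem lam4_mem : lam4 ∈ SAPP := Or.inr (by simp)
theorem lam5_mem : lam5 ∈ SAPP := Or.inr (by simp)
theorem lam6_mem : lam6 ∈ SAPP := Or.inr (by simp)

theorem sapp1 {n : ℕ} (hn : 1 ≤ n) : ∀ (y : Fin n → M) (s : M), (∀ i, oo s (y i)) →
    ∃ t, (∀ i, t ≠ y i) ∧ oo s t :=
  realize_lam1.1 (SAPP.realize_sentence_of_mem (lam1_mem hn))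

theorem sapp2 {n : ℕ} (hn : 2 ≤ n) : ∀ (y : Fin n → M), ∃ s, ∀ i, ¬ oo s (y i) :=
  realize_lam2.1 (SAPP.realize_sentence_of_mem (lam2_mem hn))

theorem oirr : ∀ x : M, ¬ oo x x :=
  realize_lam3.1 (SAPP.realize_sentence_of_mem lam3_mem)

theorem osymm : ∀ x y : M, oo x y → oo y x :=
  realize_lam4.1 (SAPP.realize_sentence_of_mem lam4_mem)

theorem oser : ∀ x : M, ∃ y, oo x y :=
  realize_lam5.1 (SAPP.realize_sentence_of_mem lam5_mem)

theorem oeuc : ∀ x y z t : M, oo x z → oo y z → oo x t → oo y t :=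
  realize_lam6.1 (SAPP.realize_sentence_of_mem lam6_mem)

/-- Sharing a neighbour implies having the same neighbourhoods. -/
theorem shareE {x y z : M} (hx : oo x z) (hy : oo y z) : ∀ t, oo x t ↔ oo y t :=
  fun t => ⟨fun h => oeuc x y z t hx hy h, fun h => oeuc y x z t hy hx h⟩

/-- Each neighbourhood `{y | oo s y}` is infinite. -/
theorem nbr_infinite (s : M) : {y : M | oo s y}.Infinite := by
  intro hfin
  obtain ⟨y0, hy0⟩ := oser s
  have hne : hfin.toFinset.Nonempty := ⟨y0, by simp [hy0]⟩
  have hk1 : 1 ≤ hfin.toFinset.card := Finset.card_pos.2 hne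
  have e := hfin.toFinset.equivFin
  obtain ⟨t, ht1, ht2⟩ := sapp1 hk1 (fun i => ((e.symm i : M))) s
    (fun i => by
      have := (e.symm i).2
      rw [Set.Finite.mem_toFinset] at this
      exact this)
  have htm : t ∈ hfin.toFinset := by rw [Set.Finite.mem_toFinset]; exact ht2
  exact ht1 (e ⟨t, htm⟩) (by rw [Equiv.symm_apply_apply])

/-- The `same neighbourhood` setoid. -/
def ES (M : Type) [L.Structure M] : Setoid M :=
  ⟨fun x y => ∀ t, oo x t ↔ oo y t,
    ⟨fun _ _ => Iff.rfl, fun h t => (h t).symm, fun h h' t => (h t).trans (h' t)⟩⟩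

/-- The set of classes. -/
abbrev QM (M : Type) [L.Structure M] := Quotient (ES M)

/-- A choice of neighbour. -/
noncomputable def wFn (x : M) : M := (oser x).choose

theorem oo_wFn (x : M) : oo x (wFn x) := (oser x).choose_spec

theorem wFn_congr {x y : M} (h : (ES M) x y) : (ES M) (wFn x) (wFn y) := by
  have h1 : oo x (wFn y) := (h (wFn y)).2 (oo_wFn y)
  exact shareE (osymm _ _ (oo_wFn x)) (osymm _ _ h1)

/-- The partner map on classes. -/
noncomputable def pQ : QM M → QM M :=
  Quotient.map wFn (fun _ _ h => wFn_congr h)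

theorem pQ_mk (x : M) : pQ (Quotient.mk (ES M) x) = Quotient.mk (ES M) (wFn x) := rfl

theorem oo_iff_pQ {x y : M} :
    oo x y ↔ pQ (Quotient.mk (ES M) x) = Quotient.mk (ES M) y := by
  rw [pQ_mk]
  constructor
  · intro h
    exact Quotient.sound (shareE (osymm _ _ (oo_wFn x)) (osymm _ _ h))
  · intro h
    exact osymm _ _ ((Quotient.exact h x).1 (osymm _ _ (oo_wFn x)))

theorem pQ_pQ (q : QM M) : pQ (pQ q) = q := by
  induction q using Quotient.ind with
  | _ x =>
    rw [pQ_mk, pQ_mk]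
    exact Quotient.sound (shareE (osymm _ _ (oo_wFn (wFn x))) (oo_wFn x))

theorem pQ_ne (q : QM M) : pQ q ≠ q := by
  induction q using Quotient.ind with
  | _ x =>
    rw [pQ_mk]
    intro h
    exact oirr x ((Quotient.exact h x).1 (osymm _ _ (oo_wFn x)))

theorem oo_congr_right {x y y' : M} (h : (ES M) y y') (hxy : oo x y) : oo x y' := by
  rw [oo_iff_pQ] at hxy ⊢
  rwa [← Quotient.sound (s := ES M) h]

/-- Fibers of the class map are infinite. -/
theorem fiber_infinite (q : QM M) : Infinite {y : M // Quotient.mk (ES M) y = q} := by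
  induction q using Quotient.ind with
  | _ x =>
    have : {y : M | oo (wFn x) y}.Infinite := nbr_infinite (wFn x)
    have hset : {y : M | oo (wFn x) y} = {y : M | Quotient.mk (ES M) y = Quotient.mk (ES M) x} := by
      ext y
      simp only [Set.mem_setOf_eq]
      rw [oo_iff_pQ, pQ_mk]
      have hww : Quotient.mk (ES M) (wFn (wFn x)) = Quotient.mk (ES M) x := by
        rw [← pQ_mk, ← pQ_mk, pQ_pQ]
      rw [hww]
      exact ⟨fun h => h.symm, fun h => h.symm⟩
    rw [hset] at this
    exact this.to_subtype

/-- There are infinitely many classes. -/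
theorem QM_infinite [Nonempty M] : Infinite (QM M) := by
  rw [← not_finite_iff_infinite]
  intro hfin
  obtain ⟨x0⟩ := ‹Nonempty M›
  have hnt : Nontrivial (QM M) := ⟨_, _, (pQ_ne (Quotient.mk (ES M) x0)).symm⟩
  have h2 : 2 ≤ Nat.card (QM M) := Finite.one_lt_card
  have e := Finite.equivFin (QM M)
  obtain ⟨s, hs⟩ := sapp2 h2 (fun i => (e.symm i).out)
  apply hs (e (Quotient.mk (ES M) (wFn s)))
  have hout : Quotient.mk (ES M) ((e.symm (e (Quotient.mk (ES M) (wFn s)))).out)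
      = Quotient.mk (ES M) (wFn s) := by
    rw [Equiv.symm_apply_apply, Quotient.out_eq]
  exact oo_congr_right ((ES M).iseqv.symm (Quotient.exact hout)) (oo_wFn s)

/-- The orbit setoid pairing each class with its partner. -/
def OS (M : Type) [L.Structure M] [SAPP.Model M] : Setoid (QM M) :=
  ⟨fun q q' => q' = q ∨ q' = pQ q, by
    constructor
    · intro q; exact Or.inl rfl
    · rintro q q' (rfl | rfl)
      · exact Or.inl rfl
      · right; rw [pQ_pQ]
    · rintro q q' q'' (rfl | rfl) h
      · exact h
      · rcases h with rfl | rfl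
        · exact Or.inr rfl
        · left; rw [pQ_pQ]⟩

/-- The set of orbits (pairs of partner classes). -/
abbrev PM (M : Type) [L.Structure M] [SAPP.Model M] := Quotient (OS M)

theorem mk_pQ (q : QM M) : Quotient.mk (OS M) (pQ q) = Quotient.mk (OS M) q :=
  Quotient.sound (Or.inr (pQ_pQ q).symm)

theorem orbit_cases {q q' : QM M}
    (h : Quotient.mk (OS M) q = Quotient.mk (OS M) q') : q' = q ∨ q' = pQ q :=
  Quotient.exact h

open Classical in
/-- Which side of its orbit a class is on. -/
noncomputable def sideQ (q : QM M) : Bool :=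
  if q = (Quotient.mk (OS M) q).out then true else false

theorem out_cases (q : QM M) :
    q = (Quotient.mk (OS M) q).out ∨ q = pQ (Quotient.mk (OS M) q).out :=
  orbit_cases (Quotient.out_eq (Quotient.mk (OS M) q))

theorem sideQ_pQ (q : QM M) : sideQ (pQ q) ≠ sideQ q := by
  rcases out_cases q with h | h
  · have h1 : sideQ q = true := by rw [sideQ, if_pos h]
    have h2 : sideQ (pQ q) = false := by
      rw [sideQ, if_neg]
      rw [mk_pQ, ← h]
      exact fun hc => pQ_ne q hc
    rw [h1, h2]; simp
  · have h1 : sideQ q = false := by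
      rw [sideQ, if_neg]
      intro hc
      exact pQ_ne ((Quotient.mk (OS M) q).out) (h.symm.trans hc)
    have h2 : sideQ (pQ q) = true := by
      rw [sideQ, if_pos]
      rw [mk_pQ]
      conv_lhs => rw [h, pQ_pQ]
    rw [h1, h2]; simp

theorem pQ_eq_iff {q q' : QM M} :
    pQ q = q' ↔ (Quotient.mk (OS M) q = Quotient.mk (OS M) q' ∧ sideQ q ≠ sideQ q') := by
  constructor
  · rintro rfl
    exact ⟨(mk_pQ q).symm, (sideQ_pQ q).symm⟩
  · rintro ⟨horb, hside⟩
    rcases orbit_cases horb with rfl | rfl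
    · exact absurd rfl hside
    · rfl

/-- Each class is determined by its orbit together with its side. -/
noncomputable def eQOrb (M : Type) [L.Structure M] [SAPP.Model M] :
    QM M ≃ PM M × Bool where
  toFun q := (Quotient.mk (OS M) q, sideQ q)
  invFun x := cond x.2 x.1.out (pQ x.1.out)
  left_inv q := by
    rcases out_cases q with h | h
    · have h1 : sideQ q = true := by rw [sideQ, if_pos h]
      simp only [h1, cond_true]
      exact h.symm
    · have h1 : sideQ q = false := by
        rw [sideQ, if_neg]
        intro hc
        exact pQ_ne ((Quotient.mk (OS M) q).out) (h.symm.trans hc)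
      simp only [h1, cond_false]
      exact h.symm
  right_inv x := by
    obtain ⟨o, b⟩ := x
    cases b
    · simp only [cond_false]
      refine Prod.ext ?_ ?_
      · simp only []
        rw [mk_pQ, Quotient.out_eq]
      · simp only []
        rw [sideQ, if_neg]
        intro hc
        rw [mk_pQ, Quotient.out_eq] at hc
        exact pQ_ne o.out hc
    · simp only [cond_true]
      refine Prod.ext ?_ ?_
      · simp only []
        rw [Quotient.out_eq]
      · simp only []
        rw [sideQ, if_pos]
        rw [Quotient.out_eq]

end Models

/-! ### The canonical countable model -/

/-- The canonical model: pairs of classes indexed by `ℕ`, sides by `Bool`,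
elements within a class by `ℕ`. -/
abbrev Canon : Type := ℕ × Bool × ℕ

instance canonStructure : L.Structure Canon where
  funMap := fun f _ => f.elim
  RelMap := fun {n} r x =>
    match r with
    | .o => (x 0).1 = (x 1).1 ∧ (x 0).2.1 ≠ (x 1).2.1

theorem ooC_iff (a b : Canon) : oo a b ↔ (a.1 = b.1 ∧ a.2.1 ≠ b.2.1) := Iff.rfl

instance canonModel : Canon ⊨ SAPP := by
  rw [Theory.model_iff]
  rintro φ ((⟨n, hn, rfl⟩ | ⟨n, hn, rfl⟩) | hφ)
  · rw [realize_lam1]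
    rintro y s hs
    obtain ⟨m, hm⟩ := Infinite.exists_notMem_finset
      (Finset.image (fun i => (y i).2.2) Finset.univ)
    refine ⟨(s.1, !s.2.1, m), fun i => ?_, ?_⟩
    · intro hc
      exact hm (Finset.mem_image.2 ⟨i, Finset.mem_univ i, by rw [← hc]⟩)
    · rw [ooC_iff]
      exact ⟨rfl, by simp⟩
  · rw [realize_lam2]
    intro y
    obtain ⟨m, hm⟩ := Infinite.exists_notMem_finset
      (Finset.image (fun i => (y i).1) Finset.univ)
    refine ⟨(m, true, 0), fun i hc => ?_⟩
    rw [ooC_iff] at hc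
    exact hm (Finset.mem_image.2 ⟨i, Finset.mem_univ i, hc.1.symm⟩)
  · simp only [Set.mem_insert_iff, Set.mem_singleton_iff] at hφ
    rcases hφ with rfl | rfl | rfl | rfl
    · rw [realize_lam3]
      rintro x ⟨-, h⟩
      exact h rfl
    · rw [realize_lam4]
      rintro x y ⟨h1, h2⟩
      exact ⟨h1.symm, h2.symm⟩
    · rw [realize_lam5]
      intro x
      exact ⟨(x.1, !x.2.1, 0), rfl, by simp⟩
    · rw [realize_lam6]
      rintro x y z t ⟨hxz1, hxz2⟩ ⟨hyz1, hyz2⟩ ⟨hxt1, hxt2⟩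
      simp only [Matrix.cons_val_zero, Matrix.cons_val_one, Matrix.head_cons] at hxz1 hxz2 hyz1 hyz2 hxt1 hxt2 ⊢
      refine ⟨hyz1.trans (hxz1.symm.trans hxt1), ?_⟩
      intro hc
      simp only [Matrix.cons_val_zero, Matrix.cons_val_one, Matrix.head_cons] at hc
      apply hxt2
      rw [← hc]
      revert hxz2 hyz2
      cases x.2.1 <;> cases y.2.1 <;> cases z.2.1 <;> simp

/-- Every model of SAPP is infinite. -/
theorem sapp_model_infinite (M : Type) [L.Structure M] [SAPP.Model M] [Nonempty M] :
    Infinite M := by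
  obtain ⟨x⟩ := ‹Nonempty M›
  have h := (nbr_infinite x).to_subtype
  exact Infinite.of_injective (Subtype.val : {y : M // y ∈ {y : M | oo x y}} → M)
    Subtype.val_injective

/-! ### Every countable model is isomorphic to the canonical one -/

theorem iso_canon (M : Type) [L.Structure M] [SAPP.Model M] [Countable M] [Infinite M] :
    Nonempty (M ≃[L] Canon) := by
  haveI hQinf : Infinite (QM M) := QM_infinite
  haveI hPinf : Infinite (PM M) := by
    rw [← not_finite_iff_infinite]
    intro hfin
    exact (not_finite_iff_infinite.2 hQinf) (Finite.of_equiv _ (eQOrb M).symm)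
  haveI : Denumerable (PM M) := (nonempty_denumerable (PM M)).some
  let eFib : ∀ q : QM M, {y : M // Quotient.mk (ES M) y = q} ≃ ℕ := fun q =>
    haveI := fiber_infinite q
    haveI : Denumerable {y : M // Quotient.mk (ES M) y = q} := (nonempty_denumerable _).some
    Denumerable.eqv _
  let F : M ≃ Canon :=
    ((Equiv.sigmaFiberEquiv (Quotient.mk (ES M))).symm.trans
      ((Equiv.sigmaCongrRight eFib).trans (Equiv.sigmaEquivProd (QM M) ℕ))).trans
      ((((eQOrb M).prodCongr (Equiv.refl ℕ)).trans (Equiv.prodAssoc (PM M) Bool ℕ)).trans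
        ((Denumerable.eqv (PM M)).prodCongr (Equiv.refl (Bool × ℕ))))
  have hF1 : ∀ x : M,
      (F x).1 = Denumerable.eqv (PM M) (Quotient.mk (OS M) (Quotient.mk (ES M) x)) :=
    fun x => rfl
  have hF2 : ∀ x : M, (F x).2.1 = sideQ (Quotient.mk (ES M) x) := fun x => rfl
  have key : ∀ x y : M, oo x y ↔ ((F x).1 = (F y).1 ∧ (F x).2.1 ≠ (F y).2.1) := by
    intro x y
    rw [hF1, hF1, hF2, hF2, oo_iff_pQ, pQ_eq_iff]
    constructor
    · rintro ⟨h1, h2⟩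
      exact ⟨by rw [h1], h2⟩
    · rintro ⟨h1, h2⟩
      exact ⟨(Denumerable.eqv (PM M)).injective h1, h2⟩
  refine ⟨⟨F, ?_, ?_⟩⟩
  · intro n f
    exact isEmptyElim f
  · intro n r x
    cases r
    have hx : x = ![x 0, x 1] := funext fun i => by fin_cases i <;> rfl
    conv_rhs => rw [hx]
    exact (key (x 0) (x 1)).symm

/-! ### Conclusion -/

theorem sapp_isComplete : SAPP.IsComplete := by
  have hcat : Cardinal.aleph0.Categorical SAPP := by
    rintro MT NT hM hN
    haveI : Countable MT := Cardinal.mk_le_aleph0_iff.1 (le_of_eq hM)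
    haveI : Infinite MT := Cardinal.infinite_iff.2 (le_of_eq hM.symm)
    haveI : Countable NT := Cardinal.mk_le_aleph0_iff.1 (le_of_eq hN)
    haveI : Infinite NT := Cardinal.infinite_iff.2 (le_of_eq hN.symm)
    obtain ⟨e1⟩ := iso_canon MT
    obtain ⟨e2⟩ := iso_canon NT
    exact ⟨e2.symm.comp e1⟩
  haveI : IsEmpty (Σ l, L.Functions l) := ⟨by rintro ⟨l, f⟩; exact f.elim⟩
  haveI : Subsingleton (Σ l, L.Relations l) := ⟨by rintro ⟨_, r⟩ ⟨_, r'⟩; cases r; cases r'; rfl⟩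
  have hcard : Cardinal.lift.{0} L.card ≤ Cardinal.lift.{0} Cardinal.aleph0 :=
    Cardinal.lift_le.2 (Cardinal.mk_le_aleph0 (α := L.Symbols))
  have hS : SAPP.IsSatisfiable := ⟨Theory.ModelType.of SAPP Canon⟩
  have hT : ∀ MT : SAPP.ModelType, Infinite MT := fun MT => sapp_model_infinite MT
  exact Cardinal.Categorical.isComplete Cardinal.aleph0 SAPP hcat le_rfl hcard hS hT


/-- the theory SAPP is complete: every L-sentence is either a logical consequence
of SAPP or its negation is. -/
theorem statement_5 (φ : L.Sentence) : SAPP ⊨ᵇ φ ∨ SAPP ⊨ᵇ ∼φ :=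
  sapp_isComplete.2 φ
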